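/- Let n be an even nonnegative integer whose minimal hyperbinary expansion has block decomposition with blocks of respective lengths a_1, …, a_r and respective types t_1, …, t_r ∈ {1, 2}. Define b_1(α,β,σ) := αβ + σ, b_2(α,β,σ) := β + ασ, s_1(α,β,σ) := (α−1)β + σ, s_2(α,β,σ) := σ, and recursively h_0 := 1, k_0 := 1, h_{i+1} := b_{t_{r−i}}(a_{r−i}, h_i, k_i), k_{i+1} := s_{t_{r−i}}(a_{r−i}, h_i, k_i) for i ∈ {0, …, r−1}. Then b(n) = h_r. -/

import Mathlib

/-- The value of a word over the digits `{0,1,2}`, read as a (hyper)binary expansion: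
`wordVal (x₀ … x_k) = Σ x_i · 2^(k-i)`. -/
def wordVal : List ℕ → ℕ
  | [] => 0
  | d :: w => d * 2 ^ w.length + wordVal w

/-- `Hyp n` is the set of hyperbinary expansions of `n`: words over `{0,1,2}` with
nonzero leading digit whose value is `n` (the empty word is the unique expansion of `0`). -/
def Hyp (n : ℕ) : Set (List ℕ) :=
  {w | (∀ d ∈ w, d ≤ 2) ∧ w.head? ≠ some 0 ∧ wordVal w = n}

/-- Single-step reduction of type `→` : `(x02y, x10y)` or `(2y, 10y)`. -/
def StepArrow (a b : List ℕ) : Prop :=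
  (∃ x y : List ℕ, a = x ++ 0 :: 2 :: y ∧ b = x ++ 1 :: 0 :: y) ∨
    (∃ y : List ℕ, a = 2 :: y ∧ b = 1 :: 0 :: y)

/-- Single-step reduction of type `↠` : `(x12y, x20y)`. -/
def StepDouble (a b : List ℕ) : Prop :=
  ∃ x y : List ℕ, a = x ++ 1 :: 2 :: y ∧ b = x ++ 2 :: 0 :: y

/-- A single-step reduction (of either type). -/
def Step (a b : List ℕ) : Prop := StepArrow a b ∨ StepDouble a b

/-- `bFun n` is the number of hyperbinary expansions of `n`. -/
noncomputable def bFun (n : ℕ) : ℕ := (Hyp n).ncard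

/-- The set of arcs of the graph `A(n)`: labeled single-step reductions between
hyperbinary expansions of `n`. -/
def arcs (n : ℕ) : Set (List ℕ × List ℕ) :=
  {p | p.1 ∈ Hyp n ∧ p.2 ∈ Hyp n ∧ Step p.1 p.2}

/-- `aFun n` is the number of arcs of `A(n)`. -/
noncomputable def aFun (n : ℕ) : ℕ := (arcs n).ncard

/-- The cyclomatic number `v(n) = a(n) - b(n) + 1` of the connected graph `A(n)`. -/
noncomputable def vFun (n : ℕ) : ℕ := aFun n + 1 - bFun n

/-- `blockWord a t` is the block of length `a` and type `t ∈ {1, 2}`: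
type `1` gives `1^(a-1)2` and type `2` gives `2^a`. -/
def blockWord (a t : ℕ) : List ℕ :=
  if t = 1 then List.replicate (a - 1) 1 ++ [2] else List.replicate a 2

/-- The pair `(h_i, k_i)` computed right-to-left over the list of blocks
`(a_1, t_1), …, (a_r, t_r)`:
`hk [] = (h_0, k_0) = (1, 1)` and a block `(a, t)` updates `(h, k)` to
`(b_t(a, h, k), s_t(a, h, k))` where `b_1(α,β,σ) = αβ + σ`, `b_2(α,β,σ) = β + ασ`,
`s_1(α,β,σ) = (α−1)β + σ` and `s_2(α,β,σ) = σ`. -/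
def hk : List (ℕ × ℕ) → ℕ × ℕ
  | [] => (1, 1)
  | (a, t) :: rest =>
    let p := hk rest
    if t = 1 then (a * p.1 + p.2, (a - 1) * p.1 + p.2) else (p.1 + a * p.2, p.2)



def B : ℕ → ℕ
  | 0 => 1
  | n+1 =>
    if h : n % 2 = 0 then B (n/2)
    else B (n/2 + 1) + B (n/2)
decreasing_by all_goals omega

lemma B_zero : B 0 = 1 := by rw [B]
lemma B_odd (j : ℕ) : B (2*j+1) = B j := by
  rw [show 2*j+1 = (2*j)+1 from rfl, B]
  simp [Nat.mul_mod_right, Nat.mul_div_cancel_left]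
lemma B_even (j : ℕ) : B (2*j+2) = B (j+1) + B j := by
  rw [show 2*j+2 = (2*j+1)+1 from rfl, B]
  have h1 : (2*j+1) % 2 = 1 := by omega
  have h2 : (2*j+1) / 2 = j := by omega
  simp [h1, h2]
lemma B_one : B 1 = 1 := by have := B_odd 0; simpa [B_zero] using this
lemma B_pred_pow (k q : ℕ) : B ((q+1) * 2^k - 1) = B q := by
  induction k with
  | zero => simp
  | succ k ih =>
    have h2 : (0:ℕ) < 2^k := Nat.pow_pos (by norm_num)
    have h3 : (q+1) * 2^(k+1) - 1 = 2 * ((q+1) * 2^k - 1) + 1 := by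
      have : (q+1) * 2^(k+1) = 2 * ((q+1) * 2^k) := by ring
      have h1 : 1 ≤ (q+1) * 2^k := Nat.one_le_iff_ne_zero.mpr (by positivity)
      omega
    rw [h3, B_odd, ih]
lemma B_pow_sub_one (k : ℕ) : B (2^k - 1) = 1 := by
  have := B_pred_pow k 0; simpa [B_zero] using this
lemma B_pow_sub_two (k : ℕ) : B (2^(k+1) - 2) = k + 1 := by
  induction k with
  | zero => simpa using B_zero
  | succ k ih =>
    have h2 : (2:ℕ) ≤ 2^(k+1) := by
      calc (2:ℕ) = 2^1 := rfl
      _ ≤ 2^(k+1) := Nat.pow_le_pow_right (by norm_num) (by omega)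
    have he : 2^(k+2) - 2 = 2 * (2^(k+1) - 2) + 2 := by
      have : (2:ℕ)^(k+2) = 2 * 2^(k+1) := by ring
      omega
    rw [he, B_even, ih]
    have : 2^(k+1) - 2 + 1 = 2^(k+1) - 1 := by omega
    rw [this, B_pow_sub_one]
    omega

/-- Master bilinear identity. -/
lemma B_master : ∀ k r s q : ℕ, 2^k = r + s + 2 →
    B ((q+1) * 2^k + r) = B r * B (q+1) + B s * B q := by
  intro k
  induction k with
  | zero => intro r s q h; simp at h
  | succ k ih =>
    intro r s q h
    have hp : (2:ℕ)^(k+1) = 2 * 2^k := by ring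
    have hpos : (1:ℕ) ≤ 2^k := Nat.one_le_two_pow
    rcases Nat.even_or_odd r with hr | hr
    · -- r even
      obtain ⟨r0, hr0⟩ := hr
      obtain ⟨r', rfl⟩ : ∃ r', r = 2 * r' := ⟨r0, by omega⟩
      obtain ⟨s', rfl⟩ : ∃ s', s = 2 * s' := ⟨s/2, by omega⟩
      have hk' : 2^k = r' + s' + 1 := by omega
      rcases Nat.eq_zero_or_pos r' with rfl | hr1
      · -- r' = 0
        rcases Nat.eq_zero_or_pos k with rfl | hk1
        · -- k = 0
          have hs0 : s' = 0 := by omega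
          subst hs0
          have : (q+1) * 2^(0+1) + 2*0 = 2*q + 2 := by ring
          rw [this, B_even]
          simp [B_zero]
        · -- k ≥ 1
          obtain ⟨k', rfl⟩ : ∃ k', k = k' + 1 := ⟨k-1, by omega⟩
          have hs' : s' = 2^(k'+1) - 1 := by omega
          have hm1 : 1 ≤ (q+1) * 2^(k'+1) := Nat.one_le_iff_ne_zero.mpr (by positivity)
          have he : (q+1) * 2^(k'+1+1) + 2*0 = 2 * ((q+1) * 2^(k'+1) - 1) + 2 := by
            have : (q+1) * 2^(k'+1+1) = 2 * ((q+1) * 2^(k'+1)) := by ring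
            omega
          rw [he, B_even]
          have h1 : (q+1) * 2^(k'+1) - 1 + 1 = (q+1) * 2^(k'+1) + 0 := by omega
          rw [h1, B_pred_pow]
          have h2 := ih 0 (2^(k'+1) - 2) q (by omega)
          rw [h2]
          have h3 : 2 * s' = 2^(k'+1+1) - 2 := by omega
          rw [h3, B_pow_sub_two, B_pow_sub_two, B_zero]
          ring
      · rcases Nat.eq_zero_or_pos s' with rfl | hs1
        · -- s' = 0, r' = 2^k - 1, k ≥ 1
          have hk1 : 1 ≤ k := by
            rcases Nat.eq_zero_or_pos k with rfl | h1
            · omega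
            · exact h1
          obtain ⟨k', rfl⟩ : ∃ k', k = k' + 1 := ⟨k-1, by omega⟩
          have hr' : r' = 2^(k'+1) - 1 := by omega
          have h5 : (q+2) * 2^(k'+1) = (q+1) * 2^(k'+1) + 2^(k'+1) := by ring
          have h6 : (q+1) * 2^(k'+1+1) = 2 * ((q+1) * 2^(k'+1)) := by ring
          have h7 : (2:ℕ) ≤ 2^(k'+1) := by
            calc (2:ℕ) = 2^1 := rfl
            _ ≤ 2^(k'+1) := Nat.pow_le_pow_right (by norm_num) (by omega)
          have hm1 : 1 ≤ (q+1) * 2^(k'+1) := Nat.one_le_iff_ne_zero.mpr (by positivity)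
          have he : (q+1) * 2^(k'+1+1) + 2*r' = 2 * ((q+2) * 2^(k'+1) - 2) + 2 := by
            omega
          rw [he, B_even]
          have h1 : (q+2) * 2^(k'+1) - 2 + 1 = (q+1+1) * 2^(k'+1) - 1 := by
            have h8 : (q+1+1) * 2^(k'+1) = (q+2) * 2^(k'+1) := by ring
            omega
          rw [h1, B_pred_pow]
          have h2 : (q+2) * 2^(k'+1) - 2 = (q+1) * 2^(k'+1) + (2^(k'+1) - 2) := by
            omega
          rw [h2, ih (2^(k'+1)-2) 0 q (by omega)]
          have h3 : 2 * r' = 2^(k'+1+1) - 2 := by omega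
          rw [h3, B_pow_sub_two, B_pow_sub_two, B_zero]
          ring
        · -- r' ≥ 1, s' ≥ 1
          have he : (q+1) * 2^(k+1) + 2*r' = 2 * ((q+1) * 2^k + (r'-1)) + 2 := by
            have : (q+1) * 2^(k+1) = 2 * ((q+1) * 2^k) := by ring
            omega
          rw [he, B_even]
          have h1 : (q+1) * 2^k + (r'-1) + 1 = (q+1) * 2^k + r' := by omega
          rw [h1, ih r' (s'-1) q (by omega), ih (r'-1) s' q (by omega)]
          have h2 : 2*r' = 2*(r'-1) + 2 := by omega
          have h3 : 2*s' = 2*(s'-1) + 2 := by omega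
          rw [h2, h3, B_even, B_even]
          have h4 : r' - 1 + 1 = r' := by omega
          have h5 : s' - 1 + 1 = s' := by omega
          rw [h4, h5]
          ring
    · -- r odd
      obtain ⟨r', rfl⟩ := hr
      obtain ⟨s', rfl⟩ : ∃ s', s = 2 * s' + 1 := ⟨s/2, by omega⟩
      have he : (q+1) * 2^(k+1) + (2*r'+1) = 2 * ((q+1) * 2^k + r') + 1 := by
        have : (q+1) * 2^(k+1) = 2 * ((q+1) * 2^k) := by ring
        omega
      rw [he, B_odd, ih r' s' q (by omega), B_odd, B_odd]

lemma wordVal_concat (w : List ℕ) (d : ℕ) : wordVal (w ++ [d]) = 2 * wordVal w + d := by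
  induction w with
  | nil => simp [wordVal]
  | cons x t ih =>
    show wordVal (x :: (t ++ [d])) = _
    simp only [wordVal, ih, List.length_append, List.length_cons, List.length_nil]
    ring

lemma Hyp_zero : Hyp 0 = {[]} := by
  ext w
  constructor
  · rintro ⟨hd, hh, hv⟩
    cases w with
    | nil => rfl
    | cons x t =>
      exfalso
      simp only [wordVal] at hv
      have hx : x = 0 := by
        have : 0 < 2 ^ t.length := Nat.pow_pos (show 0 < 2 by norm_num)
        nlinarith
      subst hx
      exact hh rfl
  · rintro rfl
    exact ⟨by simp, by simp, rfl⟩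

lemma head?_ne_zero_concat (w : List ℕ) (d : ℕ) (hd : d ≠ 0) (hw : w.head? ≠ some 0) :
    (w ++ [d]).head? ≠ some 0 := by
  cases w with
  | nil => simpa using hd
  | cons x t => simpa using hw

lemma head?_ne_zero_of_concat (w : List ℕ) (d : ℕ) (h : (w ++ [d]).head? ≠ some 0) :
    w.head? ≠ some 0 := by
  cases w with
  | nil => simp
  | cons x t => simpa using h

lemma Hyp_odd (n : ℕ) : Hyp (2*n+1) = (fun w => w ++ [1]) '' Hyp n := by
  ext w
  constructor
  · rintro ⟨hd, hh, hv⟩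
    rcases w.eq_nil_or_concat with rfl | ⟨u, d, rfl⟩
    · simp [wordVal] at hv
    · simp only [List.concat_eq_append] at hd hh hv ⊢
      rw [wordVal_concat] at hv
      have hd2 : d ≤ 2 := hd d (by simp)
      have hd1 : d = 1 := by omega
      subst hd1
      have hu : wordVal u = n := by omega
      exact ⟨u, ⟨fun e he => hd e (by simp [he]), head?_ne_zero_of_concat u 1 hh, hu⟩, rfl⟩
  · rintro ⟨u, ⟨hd, hh, hv⟩, rfl⟩
    refine ⟨?_, head?_ne_zero_concat u 1 one_ne_zero hh, ?_⟩
    · intro e he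
      rcases List.mem_append.mp he with h | h
      · exact hd e h
      · simp at h; omega
    · rw [wordVal_concat, hv]

lemma Hyp_even (n : ℕ) :
    Hyp (2*n+2) = ((fun w => w ++ [0]) '' Hyp (n+1)) ∪ ((fun w => w ++ [2]) '' Hyp n) := by
  ext w
  constructor
  · rintro ⟨hd, hh, hv⟩
    rcases w.eq_nil_or_concat with rfl | ⟨u, d, rfl⟩
    · simp [wordVal] at hv
    · simp only [List.concat_eq_append] at hd hh hv ⊢
      rw [wordVal_concat] at hv
      have hd2 : d ≤ 2 := hd d (by simp)
      have hdu : ∀ e ∈ u, e ≤ 2 := fun e he => hd e (by simp [he])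
      have hhu : u.head? ≠ some 0 := head?_ne_zero_of_concat u d hh
      have : d = 0 ∨ d = 2 := by omega
      rcases this with rfl | rfl
      · exact Or.inl ⟨u, ⟨hdu, hhu, by omega⟩, rfl⟩
      · exact Or.inr ⟨u, ⟨hdu, hhu, by omega⟩, rfl⟩
  · rintro (⟨u, ⟨hd, hh, hv⟩, rfl⟩ | ⟨u, ⟨hd, hh, hv⟩, rfl⟩)
    · have hu0 : u ≠ [] := by
        rintro rfl
        simp [wordVal] at hv
      refine ⟨?_, ?_, ?_⟩
      · intro e he
        rcases List.mem_append.mp he with h | h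
        · exact hd e h
        · simp at h; omega
      · cases u with
        | nil => exact absurd rfl hu0
        | cons x t => simpa using hh
      · rw [wordVal_concat, hv]; ring
    · refine ⟨?_, head?_ne_zero_concat u 2 two_ne_zero hh, ?_⟩
      · intro e he
        rcases List.mem_append.mp he with h | h
        · exact hd e h
        · simp at h; omega
      · rw [wordVal_concat, hv]

lemma concat_injective (d : ℕ) : Function.Injective (fun w : List ℕ => w ++ [d]) := by
  intro a b hab
  simpa using hab

lemma Hyp_finite_card : ∀ n : ℕ, (Hyp n).Finite ∧ (Hyp n).ncard = B n := by
  intro n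
  induction n using Nat.strong_induction_on with
  | _ n ih =>
    match n with
    | 0 =>
      rw [Hyp_zero]
      exact ⟨Set.finite_singleton _, by simp [B_zero]⟩
    | (m+1) =>
      rcases Nat.even_or_odd (m+1) with he | ho
      · obtain ⟨j, hj⟩ : ∃ j, m + 1 = 2*j + 2 := by
          obtain ⟨c, hc⟩ := he; exact ⟨c - 1, by omega⟩
        obtain ⟨hf1, hc1⟩ := ih (j+1) (by omega)
        obtain ⟨hf2, hc2⟩ := ih j (by omega)
        rw [hj, Hyp_even]
        have hdisj : Disjoint ((fun w => w ++ [0]) '' Hyp (j+1)) ((fun w => w ++ [2]) '' Hyp j) := by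
          rw [Set.disjoint_left]
          rintro w ⟨u, _, rfl⟩ ⟨v, _, hv⟩
          have h0 := congrArg List.getLast? hv
          simp at h0
        constructor
        · exact (hf1.image _).union (hf2.image _)
        · rw [Set.ncard_union_eq hdisj (hf1.image _) (hf2.image _),
            Set.ncard_image_of_injective _ (concat_injective 0),
            Set.ncard_image_of_injective _ (concat_injective 2), hc1, hc2, B_even]
      · obtain ⟨j, hj⟩ := ho
        obtain ⟨hf, hc⟩ := ih j (by omega)
        rw [hj, Hyp_odd]
        exact ⟨hf.image _, by
          rw [Set.ncard_image_of_injective _ (concat_injective 1), hc, B_odd]⟩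

lemma bFun_eq_B (n : ℕ) : bFun n = B n := (Hyp_finite_card n).2

lemma wordVal_append (u v : List ℕ) :
    wordVal (u ++ v) = wordVal u * 2 ^ v.length + wordVal v := by
  induction u with
  | nil => simp [wordVal]
  | cons x t ih =>
    show wordVal (x :: (t ++ v)) = _
    simp only [wordVal, ih, List.length_append]
    rw [pow_add]
    ring

lemma wordVal_rep_one (t : ℕ) : wordVal (List.replicate t 1) + 1 = 2^t := by
  induction t with
  | zero => simp [wordVal]
  | succ t ih =>
    rw [List.replicate_succ]
    show wordVal (1 :: List.replicate t 1) + 1 = _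
    simp only [wordVal, List.length_replicate]
    rw [pow_succ]
    omega

lemma wordVal_rep_two (a : ℕ) : wordVal (List.replicate a 2) + 2 = 2^(a+1) := by
  induction a with
  | zero => simp [wordVal]
  | succ a ih =>
    rw [List.replicate_succ]
    show wordVal (2 :: List.replicate a 2) + 2 = _
    simp only [wordVal, List.length_replicate]
    have : (2:ℕ)^(a+1+1) = 2 * 2^(a+1) := by ring
    have h1 : (2:ℕ)^(a+1) = 2 * 2^a := by ring
    omega

lemma blockWord_one_length (a : ℕ) (ha : 1 ≤ a) : (blockWord a 1).length = a := by
  simp [blockWord]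
  omega

lemma blockWord_one_val (a : ℕ) (ha : 1 ≤ a) : wordVal (blockWord a 1) = 2^a := by
  unfold blockWord
  rw [if_pos rfl, wordVal_append]
  have h1 := wordVal_rep_one (a-1)
  have h2 : wordVal [2] = 2 := by simp [wordVal]
  have h3 : ([2] : List ℕ).length = 1 := rfl
  rw [h2, h3]
  have h4 : (2:ℕ)^a = 2 * 2^(a-1) := by
    rw [← pow_succ']
    congr 1
    omega
  omega

lemma blockWord_two_length (a : ℕ) : (blockWord a 2).length = a := by
  simp [blockWord]

lemma blockWord_two_val (a : ℕ) : wordVal (blockWord a 2) + 2 = 2^(a+1) := by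
  simpa [blockWord] using wordVal_rep_two a

lemma hk_nil : hk [] = (1, 1) := by rw [hk]

lemma hk_cons (a t : ℕ) (rest : List (ℕ × ℕ)) :
    hk ((a, t) :: rest) =
      if t = 1 then (a * (hk rest).1 + (hk rest).2, (a - 1) * (hk rest).1 + (hk rest).2)
      else ((hk rest).1 + a * (hk rest).2, (hk rest).2) := by
  rw [hk]

lemma pow_two_le {a b : ℕ} (h : a ≤ b) : (2:ℕ)^a ≤ 2^b :=
  Nat.pow_le_pow_right (by norm_num) h

lemma inv_main : ∀ L : List (ℕ × ℕ), L ≠ [] →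
    (∀ p ∈ L, (p.2 = 1 ∧ 2 ≤ p.1) ∨ (p.2 = 2 ∧ 1 ≤ p.1)) →
    ∃ r s : ℕ,
      wordVal (L.map fun p => blockWord p.1 p.2).flatten
        = 2 ^ (L.map fun p => blockWord p.1 p.2).flatten.length + r ∧
      2 ^ (L.map fun p => blockWord p.1 p.2).flatten.length = r + s + 2 ∧
      (hk L).1 = B r + B s ∧ (hk L).2 = B s := by
  intro L
  induction L with
  | nil => intro h; exact absurd rfl h
  | cons p rest ih =>
    intro _ hblocks
    obtain ⟨a, t⟩ := p
    have hp := hblocks (a, t) (by simp)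
    simp only at hp
    rcases rest with _ | ⟨q, rest'⟩
    · -- base case: single block
      simp only [List.map_cons, List.map_nil, List.flatten_cons, List.flatten_nil,
        List.append_nil, hk_cons, hk_nil]
      rcases hp with ⟨rfl, ha⟩ | ⟨rfl, ha⟩
      · -- type 1
        obtain ⟨a', rfl⟩ : ∃ a', a = a' + 2 := ⟨a - 2, by omega⟩
        have h2 : (2:ℕ) ≤ 2^(a'+2) := pow_two_le (a := 1) (b := a'+2) (by omega)
        have hB2 : B (2^(a'+2) - 2) = a' + 2 := by
          have := B_pow_sub_two (a'+1)
          rw [show (2:ℕ)^(a'+1+1) = 2^(a'+2) by ring] at this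
          omega
        refine ⟨0, 2^(a'+2) - 2, ?_, ?_, ?_, ?_⟩
        · rw [blockWord_one_val _ (by omega), blockWord_one_length _ (by omega)]
          omega
        · rw [blockWord_one_length _ (by omega)]; omega
        · rw [if_pos rfl, hB2, B_zero]; simp only; omega
        · rw [if_pos rfl, hB2]; simp only; omega
      · -- type 2
        obtain ⟨a', rfl⟩ : ∃ a', a = a' + 1 := ⟨a - 1, by omega⟩
        have h2 : (2:ℕ) ≤ 2^(a'+1) := pow_two_le (a := 1) (b := a'+1) (by omega)
        have hval := blockWord_two_val (a'+1)
        have hpw : (2:ℕ)^(a'+1+1) = 2 * 2^(a'+1) := by ring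
        have hB2 : B (2^(a'+1) - 2) = a' + 1 := B_pow_sub_two a'
        refine ⟨2^(a'+1) - 2, 0, ?_, ?_, ?_, ?_⟩
        · rw [blockWord_two_length]; omega
        · rw [blockWord_two_length]; omega
        · rw [if_neg (by norm_num), hB2, B_zero]; simp only; omega
        · rw [if_neg (by norm_num)]; simp only [B_zero]
    · -- inductive step
      obtain ⟨r, s, hm, hls, hh, hkk⟩ := ih (by simp) (fun p hp => hblocks p (by simp [hp]))
      set Wr := ((q :: rest').map fun p => blockWord p.1 p.2).flatten with hWr
      set m := wordVal Wr with hmdef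
      set ℓ := Wr.length with hldef
      have hW : (((a,t) :: q :: rest').map (fun p => blockWord p.1 p.2)).flatten
          = blockWord a t ++ Wr := by
        simp [hWr]
      have hval : wordVal (((a,t) :: q :: rest').map (fun p => blockWord p.1 p.2)).flatten
          = wordVal (blockWord a t) * 2^ℓ + m := by
        rw [hW, wordVal_append]
      have hlen : (((a,t) :: q :: rest').map (fun p => blockWord p.1 p.2)).flatten.length
          = (blockWord a t).length + ℓ := by
        rw [hW, List.length_append]
      have hpos : (1:ℕ) ≤ 2^ℓ := Nat.one_le_two_pow
      rcases hp with ⟨rfl, ha⟩ | ⟨rfl, ha⟩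
      · -- type 1 step
        obtain ⟨a', rfl⟩ : ∃ a', a = a' + 2 := ⟨a - 2, by omega⟩
        have hbl : (blockWord (a'+2) 1).length = a' + 2 := blockWord_one_length _ (by omega)
        have hbv : wordVal (blockWord (a'+2) 1) = 2^(a'+2) := blockWord_one_val _ (by omega)
        have hq4 : (4:ℕ) ≤ 2^(a'+2) := pow_two_le (a := 2) (b := a'+2) (by omega)
        have hq2 : (2:ℕ) ≤ 2^(a'+1) := pow_two_le (a := 1) (b := a'+1) (by omega)
        have hpw : (2:ℕ)^(a'+2) = 2 * 2^(a'+1) := by ring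
        have hpadd : (2:ℕ)^(a'+2+ℓ) = 2^(a'+2) * 2^ℓ := by rw [pow_add]
        have hkey : (2^(a'+2) - 2) * 2^ℓ + 2*2^ℓ = 2^(a'+2) * 2^ℓ := by
          rw [Nat.sub_mul]
          have : 2 * 2^ℓ ≤ 2^(a'+2) * 2^ℓ := Nat.mul_le_mul_right _ (by omega)
          omega
        have hBr' : B (2^ℓ + r) = B r + B s := by
          have := B_master ℓ r s 0 hls
          simpa [B_zero, B_one] using this
        have hBs' : B ((2^(a'+2) - 2) * 2^ℓ + s) = (a'+2) * B s + (a'+1) * B r := by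
          have hmm := B_master ℓ s r (2^(a'+2) - 3) (by omega)
          rw [show 2^(a'+2) - 3 + 1 = 2^(a'+2) - 2 by omega] at hmm
          rw [hmm]
          have e1 : B (2^(a'+2) - 2) = a' + 2 := by
            have := B_pow_sub_two (a'+1)
            rw [show (2:ℕ)^(a'+1+1) = 2^(a'+2) by ring] at this
            omega
          have e2 : B (2^(a'+2) - 3) = a' + 1 := by
            have h3 : 2^(a'+2) - 3 = 2 * (2^(a'+1) - 2) + 1 := by omega
            rw [h3, B_odd]
            exact B_pow_sub_two a'
          rw [e1, e2]
          ring
        refine ⟨2^ℓ + r, (2^(a'+2) - 2) * 2^ℓ + s, ?_, ?_, ?_, ?_⟩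
        · rw [hval, hlen, hbl, hbv, hpadd, hm]; try omega
        · rw [hlen, hbl, hpadd]; try omega
        · rw [hk_cons, if_pos rfl]
          simp only
          rw [hBr', hBs', hh, hkk]
          ring
        · rw [hk_cons, if_pos rfl]
          simp only
          rw [hBs', hh, hkk, show a' + 2 - 1 = a' + 1 from rfl]
          ring
      · -- type 2 step
        obtain ⟨a', rfl⟩ : ∃ a', a = a' + 1 := ⟨a - 1, by omega⟩
        have hbl : (blockWord (a'+1) 2).length = a' + 1 := blockWord_two_length _
        have hbv : wordVal (blockWord (a'+1) 2) + 2 = 2^(a'+2) := by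
          have := blockWord_two_val (a'+1)
          rw [show (a'+1+1) = a'+2 by omega] at this
          exact this
        have hq2 : (2:ℕ) ≤ 2^(a'+1) := pow_two_le (a := 1) (b := a'+1) (by omega)
        have hpw : (2:ℕ)^(a'+2) = 2 * 2^(a'+1) := by ring
        have hpadd : (2:ℕ)^(a'+1+ℓ) = 2^(a'+1) * 2^ℓ := by rw [pow_add]
        have hkey : (2^(a'+1) - 1) * 2^ℓ + 2^ℓ = 2^(a'+1) * 2^ℓ := by
          rw [Nat.sub_mul]
          have : 1 * 2^ℓ ≤ 2^(a'+1) * 2^ℓ := Nat.mul_le_mul_right _ (by omega)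
          omega
        have hkey2 : wordVal (blockWord (a'+1) 2) * 2^ℓ + 2 * 2^ℓ = 2 * (2^(a'+1) * 2^ℓ) := by
          have e : wordVal (blockWord (a'+1) 2) * 2^ℓ + 2 * 2^ℓ
              = (wordVal (blockWord (a'+1) 2) + 2) * 2^ℓ := by ring
          rw [e, hbv, hpw]
          ring
        have hBr' : B ((2^(a'+1) - 1) * 2^ℓ + r) = B r + (a'+1) * B s := by
          have hmm := B_master ℓ r s (2^(a'+1) - 2) (by omega)
          rw [show 2^(a'+1) - 2 + 1 = 2^(a'+1) - 1 by omega] at hmm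
          rw [hmm, B_pow_sub_one, B_pow_sub_two]
          ring
        refine ⟨(2^(a'+1) - 1) * 2^ℓ + r, s, ?_, ?_, ?_, ?_⟩
        · rw [hval, hlen, hbl, hpadd, hm]; try omega
        · rw [hlen, hbl, hpadd]; try omega
        · rw [hk_cons, if_neg (by norm_num)]
          simp only
          rw [hBr', hh, hkk]
          ring
        · rw [hk_cons, if_neg (by norm_num)]
          exact hkk


/-- If the minimal hyperbinary expansion of an even nonnegative integer `n` has block
decomposition with blocks of lengths `a_1, …, a_r` and types `t_1, …, t_r ∈ {1,2}`
(no two consecutive blocks of type `2`), then `b(n) = h_r`. -/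
theorem b_eq_hk (n : ℕ) (hn : Even n) (L : List (ℕ × ℕ))
    (hblocks : ∀ p ∈ L, (p.2 = 1 ∧ 2 ≤ p.1) ∨ (p.2 = 2 ∧ 1 ≤ p.1))
    (hchain : L.Chain' fun p q => ¬(p.2 = 2 ∧ q.2 = 2))
    (hword : (L.map fun p => blockWord p.1 p.2).flatten ∈ Hyp n) :
    bFun n = (hk L).1 := by
  obtain ⟨hdig, hhead, hval⟩ := hword
  cases L with
  | nil =>
    simp only [List.map_nil, List.flatten_nil] at hval
    have hn0 : n = 0 := by simpa [wordVal] using hval.symm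
    subst hn0
    rw [bFun_eq_B, B_zero, hk_nil]
  | cons p rest =>
    obtain ⟨r, s, hm, hls, hh, _⟩ := inv_main (p :: rest) (by simp) hblocks
    have hBn : B n = B r + B s := by
      rw [← hval, hm]
      have := B_master ((p :: rest).map fun p => blockWord p.1 p.2).flatten.length r s 0 hls
      simpa [B_zero, B_one] using this
    rw [bFun_eq_B, hBn, hh]
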